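/- Under the above, det J[D](x) > 0 for P_D-almost every finite configuration x in D; however, if Rank(K_D) ≤ N then the sample measure L^μ_D of the set of configurations with exactly N+1 points is positive while its P_D-measure is zero, so P_D and L^μ_D are not equivalent in general. -/

import Mathlib

open MeasureTheory ENNReal

/-!
The Janossy density is the nonnegative constant `∏' k, (1 - lam k)` times `det J[D]`, so the
determinant is positive wherever the density does not vanish, i.e. `P`-almost everywhere.
If `lam k = 0` for `k ≥ N`, then on `N + 1` points the matrix of `J` factors through `ℝ^N`, so
its determinant vanishes: `P` gives no mass to `(N + 1)`-point configurations, whereas the sample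
measure gives them mass `μ(D)^(N+1) / (N+1)!`.
-/

section Sigma

variable {ι : Type*} {β : ι → Type*} [∀ i, MeasurableSpace (β i)]

lemma measurable_sigmaMk (i : ι) : Measurable (Sigma.mk (β := β) i) :=
  fun _ hs => MeasurableSpace.measurableSet_iInf.mp hs i

lemma measurable_sigma_of_forall {γ : Type*} [MeasurableSpace γ] {g : Sigma β → γ}
    (h : ∀ i, Measurable fun x => g ⟨i, x⟩) : Measurable g :=
  fun _ hs => MeasurableSpace.measurableSet_iInf.mpr fun i => h i hs

lemma measurableSet_sigma_fst_eq (i : ι) : MeasurableSet {σ : Sigma β | σ.1 = i} :=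
  measurableSet_setOfPred.mpr <| measurable_sigma_of_forall fun j => measurable_const (a := j = i)

end Sigma

theorem Matrix.det_mul_eq_zero_of_card_lt {m n K : Type*} [Fintype m] [DecidableEq m]
    [Fintype n] [Field K] (A : Matrix m n K) (B : Matrix n m K)
    (h : Fintype.card n < Fintype.card m) : (A * B).det = 0 := by
  by_contra hdet
  have hunit : IsUnit (A * B) := (A * B).isUnit_iff_isUnit_det.mpr (isUnit_iff_ne_zero.mpr hdet)
  have hrank : (A * B).rank ≤ Fintype.card n :=
    (A.rank_mul_le_right B).trans (B.rank_le_card_height)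
  rw [Matrix.rank_of_isUnit _ hunit] at hrank
  omega

lemma det_finiteRankKernel_eq_zero {D : Type*} (φ : ℕ → D → ℝ) (c : ℕ → ℝ) {N n : ℕ}
    (hc : ∀ k, N ≤ k → c k = 0) (hn : N < n) (x : Fin n → D) :
    (Matrix.of fun i i' => ∑' k, c k * φ k (x i) * φ k (x i')).det = 0 := by
  have hfactor : (Matrix.of fun i i' => ∑' k, c k * φ k (x i) * φ k (x i')) =
      Matrix.of (fun i (k : Fin N) => c k * φ k (x i)) *
        Matrix.of fun (k : Fin N) i' => φ k (x i') := by
    ext i i'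
    rw [Matrix.of_apply, Matrix.mul_apply,
      tsum_eq_sum (s := Finset.range N) fun k hk => by simp [hc k (by simpa using hk)],
      ← Fin.sum_univ_eq_sum_range]
    rfl
  rw [hfactor]
  exact Matrix.det_mul_eq_zero_of_card_lt _ _ (by simpa using hn)

lemma measurable_det_of_measurable_uncurry {D : Type*} [MeasurableSpace D] {J : D → D → ℝ}
    (hJ : Measurable (Function.uncurry J)) :
    Measurable fun σ : Σ n : ℕ, Fin n → D => (Matrix.of fun i i' => J (σ.2 i) (σ.2 i')).det := by
  refine measurable_sigma_of_forall fun n => ?_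
  change Measurable fun x : Fin n → D => (Matrix.of fun i i' : Fin n => J (x i) (x i')).det
  simp only [Matrix.det_apply', Matrix.of_apply]
  have hentry (i i' : Fin n) : Measurable fun x : Fin n → D => J (x i) (x i') :=
    hJ.comp (f := fun x : Fin n → D => (x i, x i'))
      ((measurable_pi_apply i).prodMk (measurable_pi_apply i'))
  exact Finset.measurable_sum Finset.univ fun p _ =>
    measurable_const.mul (Finset.measurable_prod Finset.univ fun i _ => hentry (p i) i)

noncomputable def sampleMeasure {D : Type*} [MeasurableSpace D] (μ : Measure D) :
    Measure (Σ n : ℕ, Fin n → D) :=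
  Measure.sum fun n : ℕ =>
    ((n.factorial : ℝ≥0∞))⁻¹ • ((Measure.pi fun _ : Fin n => μ).map (Sigma.mk n))

lemma sampleMeasure_sigma_fst_eq {D : Type*} [MeasurableSpace D] (μ : Measure D)
    [SigmaFinite μ] (n : ℕ) :
    sampleMeasure μ {σ | σ.1 = n} = (n.factorial : ℝ≥0∞)⁻¹ * μ Set.univ ^ n := by
  rw [sampleMeasure, Measure.sum_apply _ (measurableSet_sigma_fst_eq n), tsum_eq_single n]
  · rw [Measure.smul_apply,
      Measure.map_apply (measurable_sigmaMk n) (measurableSet_sigma_fst_eq n)]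
    simp [Measure.pi_univ]
  · intro m hm
    rw [Measure.smul_apply, Measure.map_apply (measurable_sigmaMk m) (measurableSet_sigma_fst_eq n)]
    simp [hm]

lemma ae_withDensity_ofReal_const_mul_pos {α : Type*} [MeasurableSpace α] {ν : Measure α}
    {c : ℝ} (hc : 0 ≤ c) {f : α → ℝ} (hf : Measurable f) :
    ∀ᵐ x ∂ν.withDensity (fun x => ENNReal.ofReal (c * f x)), 0 < f x := by
  rw [ae_withDensity_iff (hf.const_mul c).ennreal_ofReal]
  exact .of_forall fun x hx => pos_of_mul_pos_right (ENNReal.ofReal_ne_zero_iff.mp hx) hc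

theorem stmt7_general {D : Type*} [MeasurableSpace D] (μ : Measure D) [SigmaFinite μ]
    (φ : ℕ → D → ℝ) (lam : ℕ → ℝ)
    (hφmeas : ∀ k, Measurable (φ k))
    (hlam1 : ∀ k, lam k < 1)
    (J : D → D → ℝ)
    (hJ : ∀ x y, J x y = ∑' k, (lam k / (1 - lam k)) * φ k x * φ k y)
    (N : ℕ)
    (Lμ P : Measure (Σ n : ℕ, Fin n → D))
    (hL : Lμ = Measure.sum fun n : ℕ =>
      ((n.factorial : ℝ≥0∞))⁻¹ • ((Measure.pi fun _ : Fin n => μ).map (Sigma.mk n)))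
    (j : (Σ n : ℕ, Fin n → D) → ℝ)
    (hjdef : ∀ σ : (Σ n : ℕ, Fin n → D),
      j σ = (∏' k, (1 - lam k)) *
        Matrix.det (Matrix.of fun i i' : Fin σ.1 => J (σ.2 i) (σ.2 i')))
    (hP : P = Lμ.withDensity fun σ => ENNReal.ofReal (j σ)) :
    (∀ᵐ σ ∂P, 0 < Matrix.det (Matrix.of fun i i' : Fin σ.1 => J (σ.2 i) (σ.2 i'))) ∧
    ((∀ k, N ≤ k → lam k = 0) → μ Set.univ ≠ 0 →
      P {σ : Σ n : ℕ, Fin n → D | σ.1 = N + 1} = 0 ∧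
        0 < Lμ {σ : Σ n : ℕ, Fin n → D | σ.1 = N + 1}) := by
  have hJ_eq : J = fun x y => ∑' k, lam k / (1 - lam k) * φ k x * φ k y := funext₂ hJ
  have hJ_meas : Measurable (Function.uncurry J) := by
    rw [hJ_eq]
    exact Measurable.tsum fun k => by fun_prop
  have hdet_pos : ∀ᵐ σ ∂P, 0 < (Matrix.of fun i i' : Fin σ.1 => J (σ.2 i) (σ.2 i')).det := by
    have hc : 0 ≤ ∏' k, (1 - lam k) := tprod_nonneg fun k => by linarith [hlam1 k]
    simp_rw [hP, hjdef]
    exact ae_withDensity_ofReal_const_mul_pos hc (measurable_det_of_measurable_uncurry hJ_meas)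
  refine ⟨hdet_pos, fun hrank hμ => ⟨?_, ?_⟩⟩
  · have hdet_zero : ∀ σ ∈ {σ : Σ n : ℕ, Fin n → D | σ.1 = N + 1},
        (Matrix.of fun i i' : Fin σ.1 => J (σ.2 i) (σ.2 i')).det = 0 := by
      rintro ⟨n, x⟩ (rfl : n = N + 1)
      rw [hJ_eq]
      exact det_finiteRankKernel_eq_zero φ _ (fun k hk => by simp [hrank k hk]) N.lt_succ_self x
    rw [measure_eq_zero_iff_ae_notMem]
    filter_upwards [hdet_pos] with σ hσ hmem using hσ.ne' (hdet_zero σ hmem)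
  · rw [hL]
    change 0 < sampleMeasure μ _
    rw [sampleMeasure_sigma_fst_eq]
    exact ENNReal.mul_pos (by simp) (pow_ne_zero _ hμ)

/-- With the kernel `J[D](x,y) = ∑ (lam k/(1-lam k)) φ k x φ k y` of a determinantal
process whose Janossy density is `j = Det(Id-K_D) det J[D](·)` with respect to the
sample measure `L^μ`, we have `det J[D](x) > 0` for `P_D`-a.e. configuration `x`.
However, if `Rank(K_D) ≤ N` (i.e. `lam k = 0` for `k ≥ N`) and `μ ≠ 0`, then the set of
configurations with exactly `N+1` points has `P_D`-measure zero but positive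
`L^μ`-measure, so `P_D` and `L^μ` are not equivalent in general. -/
theorem stmt7 {D : Type*} [MeasurableSpace D] (μ : Measure D) [SigmaFinite μ]
    (φ : ℕ → D → ℝ) (lam : ℕ → ℝ)
    (hφmeas : ∀ k, Measurable (φ k))
    (horth : ∀ k l, ∫ x, φ k x * φ l x ∂μ = if k = l then 1 else 0)
    (hlam0 : ∀ k, 0 ≤ lam k) (hlam1 : ∀ k, lam k < 1) (hsum : Summable lam)
    (J : D → D → ℝ)
    (hJ : ∀ x y, J x y = ∑' k, (lam k / (1 - lam k)) * φ k x * φ k y)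
    (N : ℕ)
    (Lμ P : Measure (Σ n : ℕ, Fin n → D))
    (hL : Lμ = Measure.sum fun n : ℕ =>
      ((n.factorial : ℝ≥0∞))⁻¹ • ((Measure.pi fun _ : Fin n => μ).map (Sigma.mk n)))
    (j : (Σ n : ℕ, Fin n → D) → ℝ)
    (hjdef : ∀ σ : (Σ n : ℕ, Fin n → D),
      j σ = (∏' k, (1 - lam k)) *
        Matrix.det (Matrix.of fun i i' : Fin σ.1 => J (σ.2 i) (σ.2 i')))
    (hP : P = Lμ.withDensity fun σ => ENNReal.ofReal (j σ))
    [IsProbabilityMeasure P] :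
    (∀ᵐ σ ∂P, 0 < Matrix.det (Matrix.of fun i i' : Fin σ.1 => J (σ.2 i) (σ.2 i'))) ∧
    ((∀ k, N ≤ k → lam k = 0) → μ Set.univ ≠ 0 →
      P {σ : Σ n : ℕ, Fin n → D | σ.1 = N + 1} = 0 ∧
        0 < Lμ {σ : Σ n : ℕ, Fin n → D | σ.1 = N + 1}) :=
  stmt7_general μ φ lam hφmeas hlam1 J hJ N Lμ P hL j hjdef hP
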